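/- Fix a system of positive coset-depending weights w. For a game c = (c_1,…,c_n), the following are equivalent: (i) there exists a function P : S → ℝ such that for every player i and every s ∈ S, c_i(s) = w_i(s_{-i})·(P(s) − (1/k_i)·Σ_{x∈S_i} P(x, s_{-i})); (ii) for every player i and every s_{-i} ∈ S_{-i}, Σ_{x∈S_i} c_i(x, s_{-i}) = 0, and c is a coset weighted potential game with respect to w. -/
import Mathlib


/-- `f : S → ℝ` depends only on the strategies of the players other than `i`
(i.e. it is a function of `s_{-i}`). -/
def IndepOf {n : ℕ} {k : Fin n → ℕ} (i : Fin n) (f : (∀ j, Fin (k j)) → ℝ) : Prop :=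
  ∀ (s : ∀ j, Fin (k j)) (x : Fin (k i)), f (Function.update s i x) = f s

/-- `P` is a coset weighted potential function for the game `c` with respect to the
coset-depending weights `w`. -/
def IsCWPotentialFn {n : ℕ} {k : Fin n → ℕ} (c w : Fin n → (∀ j, Fin (k j)) → ℝ)
    (P : (∀ j, Fin (k j)) → ℝ) : Prop :=
  ∀ (i : Fin n) (s : ∀ j, Fin (k j)) (x y : Fin (k i)),
    c i (Function.update s i x) - c i (Function.update s i y)
      = w i s * (P (Function.update s i x) - P (Function.update s i y))

/-- `c` is a coset weighted potential game with respect to `w`. -/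
def IsCWPG {n : ℕ} {k : Fin n → ℕ} (w c : Fin n → (∀ j, Fin (k j)) → ℝ) : Prop :=
  ∃ P, IsCWPotentialFn c w P

/-- `c` is a coset weighted pure potential game w.r.t. `w`:
`c_i(s) = w_i(s_{-i}) (P(s) − (1/k_i) Σ_{x ∈ S_i} P(x, s_{-i}))` for some `P`. -/
def IsCWPurePotential {n : ℕ} {k : Fin n → ℕ}
    (w c : Fin n → (∀ j, Fin (k j)) → ℝ) : Prop :=
  ∃ P : (∀ j, Fin (k j)) → ℝ, ∀ (i : Fin n) (s : ∀ j, Fin (k j)),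
    c i s = w i s * (P s - (1 / (k i : ℝ)) * ∑ x : Fin (k i), P (Function.update s i x))

/-- `c` is a non-strategic game. -/
def IsNonStrategic {n : ℕ} {k : Fin n → ℕ} (c : Fin n → (∀ j, Fin (k j)) → ℝ) : Prop :=
  ∀ (i : Fin n) (s : ∀ j, Fin (k j)) (x y : Fin (k i)),
    c i (Function.update s i x) = c i (Function.update s i y)

/-- The inner product `⟨c, c'⟩ = Σ_i Σ_s c_i(s) c'_i(s)` on the space of games. -/
noncomputable def gameInner {n : ℕ} {k : Fin n → ℕ}
    (c c' : Fin n → (∀ j, Fin (k j)) → ℝ) : ℝ :=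
  ∑ i : Fin n, ∑ s : ∀ j, Fin (k j), c i s * c' i s

/-- `c` is a coset weighted pure harmonic game w.r.t. `w`: it is orthogonal to every
coset weighted potential game w.r.t. `w`. -/
def IsCWPureHarmonic {n : ℕ} {k : Fin n → ℕ}
    (w c : Fin n → (∀ j, Fin (k j)) → ℝ) : Prop :=
  ∀ c' : Fin n → (∀ j, Fin (k j)) → ℝ, IsCWPG w c' → gameInner c c' = 0

/-- **Theorem 3.4 (equivalence of statements 2 and 3).** A game `c` satisfies
`c_i(s) = w_i(s_{-i})(P(s) − (1/k_i) Σ_{x∈S_i} P(x,s_{-i}))` for some `P` iff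
`Σ_{x∈S_i} c_i(x, s_{-i}) = 0` for all `i, s_{-i}` and `c` is a coset weighted
potential game with respect to `w`. -/
theorem pure_potential_iff (n : ℕ) (hn : 2 ≤ n) (k : Fin n → ℕ)
    (hk : ∀ i, 2 ≤ k i) (w : Fin n → (∀ j, Fin (k j)) → ℝ)
    (hw : ∀ i s, 0 < w i s) (hwI : ∀ i, IndepOf i (w i))
    (c : Fin n → (∀ j, Fin (k j)) → ℝ) :
    IsCWPurePotential w c ↔
      ((∀ (i : Fin n) (s : ∀ j, Fin (k j)),
          ∑ x : Fin (k i), c i (Function.update s i x) = 0) ∧ IsCWPG w c) := by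
  constructor
  · rintro ⟨P, hP⟩
    have hki : ∀ i, (k i : ℝ) ≠ 0 := fun i => by
      have := hk i; exact Nat.cast_ne_zero.mpr (by omega)
    constructor
    · intro i s
      have havg : ∀ x : Fin (k i),
          ∑ y : Fin (k i), P (Function.update (Function.update s i x) i y)
            = ∑ y : Fin (k i), P (Function.update s i y) := by
        intro x; simp [Function.update_idem]
      have : ∀ x : Fin (k i), c i (Function.update s i x)
          = w i s * (P (Function.update s i x)
            - (1 / (k i : ℝ)) * ∑ y : Fin (k i), P (Function.update s i y)) := by
        intro x
        rw [hP i (Function.update s i x), hwI i s x, havg x]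
      rw [Finset.sum_congr rfl (fun x _ => this x), ← Finset.mul_sum,
        Finset.sum_sub_distrib, Finset.sum_const]
      simp only [Finset.card_univ, Fintype.card_fin, nsmul_eq_mul]
      rw [← mul_assoc, mul_one_div_cancel (hki i), one_mul, sub_self, mul_zero]
    · refine ⟨P, fun i s x y => ?_⟩
      rw [hP i (Function.update s i x), hP i (Function.update s i y),
        hwI i s x, hwI i s y]
      have h1 : ∑ z : Fin (k i), P (Function.update (Function.update s i x) i z)
          = ∑ z : Fin (k i), P (Function.update s i z) := by
        simp [Function.update_idem]
      have h2 : ∑ z : Fin (k i), P (Function.update (Function.update s i y) i z)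
          = ∑ z : Fin (k i), P (Function.update s i z) := by
        simp [Function.update_idem]
      rw [h1, h2]; ring
  · rintro ⟨hsum, P, hP⟩
    refine ⟨P, fun i s => ?_⟩
    have hki : (k i : ℝ) ≠ 0 := Nat.cast_ne_zero.mpr (by have := hk i; omega)
    have key : ∑ y : Fin (k i),
        (c i (Function.update s i (s i)) - c i (Function.update s i y))
      = ∑ y : Fin (k i),
        w i s * (P (Function.update s i (s i)) - P (Function.update s i y)) :=
      Finset.sum_congr rfl (fun y _ => hP i s (s i) y)
    simp only [Finset.sum_sub_distrib, Finset.sum_const, Finset.card_univ,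
      Fintype.card_fin, nsmul_eq_mul, hsum i s, Function.update_eq_self,
      ← Finset.mul_sum] at key
    have : (k i : ℝ) * c i s - 0 = w i s * ((k i : ℝ) * P s - ∑ y : Fin (k i), P (Function.update s i y)) := key
    field_simp
    linarith [this]
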